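/- Let α > 1 be a real number and let d : ℝ³ × ℝ³ → [0,∞) be a quasi-distance on ℝ³ that is left-invariant for the Heisenberg group law, self-similar (there exists λ₀ ∈ (0,1) with d(δ_{λ₀}(p), δ_{λ₀}(q)) = λ₀·d(p,q) for all p, q, where δ_λ(x,y,z) := (λx, λ^α y, λ^{α+1} z)), continuous on ℝ³ × ℝ³ for the standard topology, and such that (ℝ³, d) satisfies the Weak Besicovitch Covering Property. Then for every p = (x_p, y_p, z_p) ∈ ℝ³ with d(0,p) = 1 and x_p ≠ 0, and for every t ∈ [0,1], one has d(0, ((1−t)·x_p, y_p, z_p + t·x_p·y_p/2)) ≤ 1; that is, the segment σ̂_p := {((1−t)x_p, y_p, z_p + t·x_p·y_p/2) : t ∈ [0,1]} is contained in the unit ball B_d(0,1). -/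

import Mathlib

/-- The first Heisenberg group law on `ℝ³`. -/
noncomputable def hmul (p q : ℝ × ℝ × ℝ) : ℝ × ℝ × ℝ :=
  (p.1 + q.1, p.2.1 + q.2.1, p.2.2 + q.2.2 + (p.1 * q.2.1 - p.2.1 * q.1) / 2)

/-- The group inverse for the Heisenberg group law. -/
noncomputable def hinv (p : ℝ × ℝ × ℝ) : ℝ × ℝ × ℝ := (-p.1, -p.2.1, -p.2.2)

/-- The dilations of the non-standard grading of exponent `α` on the first Heisenberg
group: `δ_l(x,y,z) = (l·x, l^α·y, l^(α+1)·z)`. -/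
noncomputable def hdil (α l : ℝ) (p : ℝ × ℝ × ℝ) : ℝ × ℝ × ℝ :=
  (l * p.1, l ^ α * p.2.1, l ^ (α + 1) * p.2.2)

/-- The closed ball of center `p` and radius `r` for a distance-like function `d`. -/
def QBall {X : Type*} (d : X → X → ℝ) (p : X) (r : ℝ) : Set X := {q | d q p ≤ r}

/-- A quasi-distance. -/
def IsQuasiDist {X : Type*} (d : X → X → ℝ) : Prop :=
  (∀ p q, 0 ≤ d p q) ∧ (∀ p q, d p q = d q p) ∧ (∀ p q, d p q = 0 ↔ p = q) ∧
    ∃ C : ℝ, 1 ≤ C ∧ ∀ p p' q, d p q ≤ C * (d p p' + d p' q)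

/-- A family of Besicovitch balls. -/
def IsBesicovitchFamily {X : Type*} (d : X → X → ℝ) (s : Finset X) (r : X → ℝ) : Prop :=
  (∀ x ∈ s, 0 < r x) ∧ (∀ x ∈ s, ∀ y ∈ s, x ≠ y → x ∉ QBall d y (r y)) ∧
    ∃ z, ∀ x ∈ s, z ∈ QBall d x (r x)

/-- The Weak Besicovitch Covering Property. -/
def HasWBCP {X : Type*} (d : X → X → ℝ) : Prop :=
  ∃ Q : ℕ, 1 ≤ Q ∧ ∀ (s : Finset X) (r : X → ℝ), IsBesicovitchFamily d s r → s.card ≤ Q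

/-!
If WBCP holds, then for every `q` there are arbitrarily small `ν > 0` with
`d(q, δ_ν q) ≤ d(0, q)`: otherwise, for `n` large, the balls centred at `δ_{λ₀^{nk}} q` of radius
`d(0, δ_{λ₀^{nk}} q)` form Besicovitch families of any size, all containing `0`.
By left invariance this reads `d(0, g·δ_ν(g⁻¹)) ≤ d(0, g)` for `g = q⁻¹`, and since `α > 1` the
curve `ν ↦ g·δ_ν(g⁻¹)` leaves `g` along `σ̂_p`, up to errors of order `ν^α`. So from any point near
`σ̂_p` in the unit ball one can move further along `σ̂_p` without leaving the ball. The errors are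
absorbed in a tube around `σ̂_p` whose width grows linearly with the parameter, and the point of
that tube in the unit ball with the largest parameter cannot lie before the end of the segment.
-/

open Filter Topology

theorem hmul_zero (p : ℝ × ℝ × ℝ) : hmul p 0 = p := by
  simp [hmul]

theorem hmul_hinv_cancel (p : ℝ × ℝ × ℝ) : hmul p (hinv p) = 0 := by
  ext <;> simp only [hmul, hinv, Prod.fst_zero, Prod.snd_zero] <;> ring

theorem hdil_zero (α l : ℝ) : hdil α l 0 = 0 := by
  simp [hdil]

theorem hdil_comp (α : ℝ) {a b : ℝ} (ha : 0 ≤ a) (hb : 0 ≤ b) (p : ℝ × ℝ × ℝ) :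
    hdil α a (hdil α b p) = hdil α (a * b) p := by
  simp only [hdil, Real.mul_rpow ha hb]
  ext <;> simp only <;> ring

theorem hdil_iterate (α : ℝ) {l : ℝ} (hl : 0 ≤ l) (m : ℕ) : (hdil α l)^[m] = hdil α (l ^ m) := by
  induction m with
  | zero => ext p <;> simp [hdil]
  | succ m ih =>
    ext1 p
    rw [Function.iterate_succ_apply', ih, hdil_comp α hl (pow_nonneg hl m), pow_succ']

theorem dist_iterate_eq_pow_mul {X : Type*} {d : X → X → ℝ} {f : X → X} {l : ℝ}
    (hf : ∀ a b, d (f a) (f b) = l * d a b) (m : ℕ) (a b : X) :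
    d (f^[m] a) (f^[m] b) = l ^ m * d a b := by
  induction m generalizing a b with
  | zero => simp
  | succ m ih => rw [Function.iterate_succ_apply, Function.iterate_succ_apply, ih, hf, pow_succ,
      mul_assoc]

theorem not_hasWBCP_of_separated {X : Type*} {d : X → X → ℝ} (hdiag : ∀ p, d p p = 0)
    (o : X) (w : ℕ → X) (hpos : ∀ k, 0 < d o (w k))
    (hsep : ∀ k l, k ≠ l → d o (w l) < d (w k) (w l)) : ¬ HasWBCP d := by
  classical
  rintro ⟨Q, -, hQ⟩
  have hw : Function.Injective w := by
    intro k l hkl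
    by_contra hne
    have := hsep k l hne
    rw [hkl, hdiag] at this
    exact (hpos l).not_gt this
  have hfam : IsBesicovitchFamily d ((Finset.range (Q + 1)).image w) (fun u => d o u) := by
    refine ⟨?_, ?_, o, ?_⟩
    · simp only [Finset.mem_image]
      rintro _ ⟨k, -, rfl⟩
      exact hpos k
    · simp only [Finset.mem_image]
      rintro _ ⟨k, -, rfl⟩ _ ⟨l, -, rfl⟩ hkl
      exact not_le.2 (hsep k l fun h => hkl (h ▸ rfl))
    · exact fun u _ => le_refl (d o u)
  have := hQ _ _ hfam
  rw [Finset.card_image_of_injective _ hw, Finset.card_range] at this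
  omega

theorem HasWBCP.frequently_iterate_dist_le {X : Type*} {d : X → X → ℝ} (hd : IsQuasiDist d)
    (hw : HasWBCP d) {f : X → X} {o : X} {l : ℝ} (hl0 : 0 < l) (hl1 : l ≤ 1) (ho : f o = o)
    (hf : ∀ a b, d (f a) (f b) = l * d a b) (q : X) :
    ∃ᶠ m in atTop, d q (f^[m] q) ≤ d o q := by
  obtain ⟨hnonneg, hsymm, hzero, -⟩ := hd
  by_contra hfreq
  obtain ⟨N, hN⟩ := eventually_atTop.1 (not_frequently.1 hfreq)
  simp only [not_le] at hN
  have hq : 0 < d o q := by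
    refine (hnonneg o q).lt_of_ne fun h => ?_
    have := hN N le_rfl
    rw [← (hzero o q).1 h.symm, Function.iterate_fixed ho, (hzero o o).2 rfl] at this
    exact this.false
  set n := N + 1
  have hdo : ∀ k, d o (f^[n * k] q) = l ^ (n * k) * d o q := fun k => by
    rw [← dist_iterate_eq_pow_mul hf, Function.iterate_fixed ho]
  have hlt : ∀ k l', k < l' → l ^ (n * k) * d o q < d (f^[n * k] q) (f^[n * l'] q) := by
    intro k l' hkl
    obtain ⟨j, rfl⟩ := Nat.exists_eq_add_of_le hkl.le
    rw [Nat.mul_add, Function.iterate_add_apply, dist_iterate_eq_pow_mul hf]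
    have hj : N ≤ n * j := le_trans N.le_succ (Nat.le_mul_of_pos_right n (by omega))
    exact mul_lt_mul_of_pos_left (hN _ hj) (pow_pos hl0 _)
  refine not_hasWBCP_of_separated (fun p => (hzero p p).2 rfl) o (fun k => f^[n * k] q)
    (fun k => by simp only [hdo]; positivity) (fun k l' hkl => ?_) hw
  simp only [hdo]
  rcases hkl.lt_or_gt with hkl | hkl
  · refine lt_of_le_of_lt ?_ (hlt k l' hkl)
    exact mul_le_mul_of_nonneg_right
      (pow_le_pow_of_le_one hl0.le hl1 (Nat.mul_le_mul_left n hkl.le)) hq.le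
  · rw [hsymm (f^[n * k] q)]
    exact hlt l' k hkl

theorem frequently_dist_hdil_le {α l : ℝ} {d : (ℝ × ℝ × ℝ) → (ℝ × ℝ × ℝ) → ℝ}
    (hd : IsQuasiDist d) (hw : HasWBCP d) (hl0 : 0 < l) (hl1 : l < 1)
    (hss : ∀ p q, d (hdil α l p) (hdil α l q) = l * d p q) (q : ℝ × ℝ × ℝ) :
    ∃ᶠ ν in 𝓝[>] 0, d q (hdil α ν q) ≤ d 0 q := by
  have h := hw.frequently_iterate_dist_le hd hl0 hl1.le (hdil_zero α l) hss q
  simp only [hdil_iterate α hl0.le] at h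
  exact (tendsto_pow_atTop_nhdsWithin_zero_of_lt_one hl0 hl1).frequently h

noncomputable def segPoint (p : ℝ × ℝ × ℝ) (s : ℝ) : ℝ × ℝ × ℝ :=
  ((1 - s) * p.1, p.2.1, p.2.2 + s * (p.1 * p.2.1) / 2)

noncomputable def tubePoint (p v : ℝ × ℝ × ℝ) : ℝ × ℝ × ℝ :=
  hmul (segPoint p v.1) (0, v.2.1, v.2.2)

theorem tubePoint_mul_hdil_hinv (α : ℝ) (p : ℝ × ℝ × ℝ) (s b c : ℝ) {ν : ℝ} (hν : 0 < ν) :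
    hmul (tubePoint p (s, b, c)) (hdil α ν (hinv (tubePoint p (s, b, c)))) =
      tubePoint p (s + ν * (1 - s), b + ν ^ α * (-b - p.2.1),
        c + ν * (1 - s) * p.1 * b +
          ν ^ (α + 1) * (-c - (1 - s) * p.1 * b - p.2.2 - p.1 * p.2.1 / 2)) := by
  simp only [tubePoint, segPoint, hmul, hdil, hinv, Real.rpow_add_one hν.ne']
  ext <;> simp only <;> ring

theorem eventually_abs_rpow_mul_le {α : ℝ} (hα : 1 < α) (β : ℝ) {ε : ℝ} (hε : 0 < ε) :
    ∀ᶠ ν in 𝓝[>] (0 : ℝ), |ν ^ α * β| ≤ ε * ν := by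
  have hlim : Tendsto (fun ν : ℝ => ν ^ (α - 1) * |β|) (𝓝[>] 0) (𝓝 0) := by
    have hc : ContinuousAt (fun ν : ℝ => ν ^ (α - 1) * |β|) 0 :=
      (Real.continuousAt_rpow_const 0 (α - 1) (Or.inr (by linarith))).mul continuousAt_const
    simpa [Real.zero_rpow (by linarith : α - 1 ≠ 0)] using hc.tendsto.mono_left nhdsWithin_le_nhds
  filter_upwards [hlim.eventually (ge_mem_nhds hε), self_mem_nhdsWithin] with ν hνε hν
  have hν : (0 : ℝ) < ν := hν
  have hsplit : ν ^ α = ν ^ (α - 1) * ν := by rw [← Real.rpow_add_one hν.ne', sub_add_cancel]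
  calc |ν ^ α * β| = ν ^ (α - 1) * |β| * ν := by
        rw [abs_mul, abs_of_nonneg (Real.rpow_nonneg hν.le α), hsplit]; ring
    _ ≤ ε * ν := mul_le_mul_of_nonneg_right hνε hν.le

/-- The width in `c` has to absorb the drift `u * x * b` appearing in `tubePoint_mul_hdil_hinv`,
hence the factor `1 + 2 * |x|`. -/
def tube (x θ : ℝ) : Set (ℝ × ℝ × ℝ) :=
  {v | |v.2.1| ≤ θ * (1 + v.1) ∧ |v.2.2| ≤ (1 + 2 * |x|) * θ * (1 + v.1)}

theorem add_mem_tube {x θ u e₁ e₂ : ℝ} {v : ℝ × ℝ × ℝ} (hv : v ∈ tube x θ) (hv1 : v.1 ≤ 1)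
    (hθ : 0 ≤ θ) (hu : 0 ≤ u) (he₁ : |e₁| ≤ θ * u) (he₂ : |e₂| ≤ θ * u) :
    (v.1 + u, v.2.1 + e₁, v.2.2 + u * x * v.2.1 + e₂) ∈ tube x θ := by
  obtain ⟨hb, hc⟩ := hv
  have hxb : |u * x * v.2.1| ≤ u * (2 * |x|) * θ := by
    rw [abs_mul, abs_mul, abs_of_nonneg hu, mul_assoc, mul_assoc]
    refine mul_le_mul_of_nonneg_left ?_ hu
    calc |x| * |v.2.1| ≤ |x| * (2 * θ) := mul_le_mul_of_nonneg_left (by nlinarith) (abs_nonneg x)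
      _ = 2 * |x| * θ := by ring
  constructor
  · calc |v.2.1 + e₁| ≤ |v.2.1| + |e₁| := abs_add_le _ _
      _ ≤ θ * (1 + (v.1 + u)) := by linarith
  · calc |v.2.2 + u * x * v.2.1 + e₂| ≤ |v.2.2| + |u * x * v.2.1| + |e₂| := abs_add_three _ _ _
      _ ≤ (1 + 2 * |x|) * θ * (1 + (v.1 + u)) := by linarith

theorem isCompact_tube_inter_Icc {x θ : ℝ} (hθ : 0 ≤ θ) (t : ℝ) :
    IsCompact (tube x θ ∩ Prod.fst ⁻¹' Set.Icc 0 t) := by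
  set K := 1 + 2 * |x|
  have hclosed : IsClosed (tube x θ ∩ Prod.fst ⁻¹' Set.Icc 0 t) := by
    simp only [tube, Set.ofPred_and]
    exact ((isClosed_le (by fun_prop) (by fun_prop)).inter
      (isClosed_le (by fun_prop) (by fun_prop))).inter (isClosed_Icc.preimage continuous_fst)
  have hsub : tube x θ ∩ Prod.fst ⁻¹' Set.Icc 0 t ⊆ Set.Icc 0 t ×ˢ
      (Set.Icc (-(θ * (1 + t))) (θ * (1 + t)) ×ˢ
        Set.Icc (-(K * θ * (1 + t))) (K * θ * (1 + t))) := by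
    rintro v ⟨⟨hb, hc⟩, hv0, hvt⟩
    have hK : 0 ≤ K * θ := mul_nonneg (by positivity) hθ
    refine ⟨⟨hv0, hvt⟩, abs_le.1 (hb.trans ?_), abs_le.1 (hc.trans ?_)⟩ <;> gcongr
  exact (isCompact_Icc.prod (isCompact_Icc.prod isCompact_Icc)).of_isClosed_subset hclosed hsub

theorem exists_pos_tube_slice_subset {U : Set (ℝ × ℝ × ℝ)} (hU : IsOpen U) {t : ℝ}
    (ht : (t, 0, 0) ∈ U) (ht1 : t ≤ 1) (x : ℝ) :
    ∃ θ > 0, ∀ v ∈ tube x θ, v.1 = t → v ∈ U := by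
  obtain ⟨ε, hε, hball⟩ := Metric.isOpen_iff.1 hU _ ht
  set K := 1 + 2 * |x|
  have hK : 1 ≤ K := by simp only [K]; linarith [abs_nonneg x]
  set θ := ε / (4 * K)
  have hθ : 0 < θ := by positivity
  have hKθ : K * θ = ε / 4 := by simp only [θ]; field_simp
  refine ⟨θ, hθ, fun v ⟨hb, hc⟩ hvt => hball ?_⟩
  rw [hvt] at hb hc
  have hθK : θ ≤ K * θ := le_mul_of_one_le_left hθ.le hK
  rw [Metric.mem_ball, Prod.dist_eq, Prod.dist_eq, Real.dist_eq, Real.dist_eq, Real.dist_eq, hvt,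
    sub_self, abs_zero, sub_zero, sub_zero]
  exact max_lt hε (max_lt (by nlinarith) (by nlinarith))

theorem exists_tube_advance {α l : ℝ} {d : (ℝ × ℝ × ℝ) → (ℝ × ℝ × ℝ) → ℝ} (hα : 1 < α)
    (hd : IsQuasiDist d) (hinvL : ∀ p q q', d (hmul p q) (hmul p q') = d q q') (hw : HasWBCP d)
    (hl0 : 0 < l) (hl1 : l < 1) (hss : ∀ p q, d (hdil α l p) (hdil α l q) = l * d p q)
    (p : ℝ × ℝ × ℝ) {θ t : ℝ} (hθ : 0 < θ) {v : ℝ × ℝ × ℝ} (hv : v ∈ tube p.1 θ) (hv0 : 0 ≤ v.1)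
    (hvt : v.1 < t) (ht1 : t ≤ 1) :
    ∃ w ∈ tube p.1 θ, v.1 < w.1 ∧ w.1 ≤ t ∧ d 0 (tubePoint p w) ≤ d 0 (tubePoint p v) := by
  obtain ⟨s, b, c⟩ := v
  dsimp only at hv0 hvt
  set g := tubePoint p (s, b, c)
  have hfreq : ∃ᶠ ν in 𝓝[>] 0, d 0 (hmul g (hdil α ν (hinv g))) ≤ d 0 g := by
    have hg : d 0 (hinv g) = d 0 g := by
      rw [← hinvL g, hmul_zero, hmul_hinv_cancel, hd.2.1]
    refine (frequently_dist_hdil_le hd hw hl0 hl1 hss (hinv g)).mono fun ν h => ?_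
    rwa [← hinvL g, hmul_hinv_cancel, hg] at h
  have hε : 0 < θ * (1 - s) := mul_pos hθ (by linarith)
  have hsmall : ∀ᶠ ν in 𝓝[>] (0 : ℝ), ν ∈ Set.Ioc 0 (t - s) := Ioc_mem_nhdsGT (sub_pos.2 hvt)
  obtain ⟨ν, hνg, ⟨hν, hνt⟩, hβ, hγ⟩ := (hfreq.and_eventually <| hsmall.and <|
    (eventually_abs_rpow_mul_le hα (-b - p.2.1) hε).and
    (eventually_abs_rpow_mul_le (by linarith : 1 < α + 1)
      (-c - (1 - s) * p.1 * b - p.2.2 - p.1 * p.2.1 / 2) hε)).exists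
  refine ⟨_, add_mem_tube (u := ν * (1 - s)) hv (by linarith) hθ.le (by nlinarith)
    (hβ.trans_eq (by ring)) (hγ.trans_eq (by ring)), by nlinarith, by nlinarith, ?_⟩
  rw [← tubePoint_mul_hdil_hinv α p s b c hν]
  exact hνg

theorem dist_zero_segPoint_le_one {α l : ℝ} {d : (ℝ × ℝ × ℝ) → (ℝ × ℝ × ℝ) → ℝ} (hα : 1 < α)
    (hd : IsQuasiDist d) (hinvL : ∀ p q q', d (hmul p q) (hmul p q') = d q q')
    (hl0 : 0 < l) (hl1 : l < 1) (hss : ∀ p q, d (hdil α l p) (hdil α l q) = l * d p q)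
    (hcont : Continuous (fun pq : (ℝ × ℝ × ℝ) × (ℝ × ℝ × ℝ) => d pq.1 pq.2)) (hw : HasWBCP d)
    {p : ℝ × ℝ × ℝ} (hp : d 0 p ≤ 1) {t : ℝ} (ht0 : 0 ≤ t) (ht1 : t ≤ 1) :
    d 0 (segPoint p t) ≤ 1 := by
  by_contra! hbig
  have hΨ : Continuous fun v => d 0 (tubePoint p v) :=
    hcont.comp (continuous_const.prodMk (by unfold segPoint; fun_prop))
  have htubePoint : ∀ s, tubePoint p (s, 0, 0) = segPoint p s := fun s => by
    simp [tubePoint, hmul]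
  obtain ⟨θ, hθ, hend⟩ := exists_pos_tube_slice_subset (isOpen_lt continuous_const hΨ)
    (by rwa [Set.mem_ofPred_eq, htubePoint]) ht1 p.1
  set F := tube p.1 θ ∩ Prod.fst ⁻¹' Set.Icc 0 t ∩ {v | d 0 (tubePoint p v) ≤ 1}
  have hF : IsCompact F :=
    (isCompact_tube_inter_Icc hθ.le t).inter_right (isClosed_le hΨ continuous_const)
  have h0F : (0, 0, 0) ∈ F := by
    refine ⟨⟨⟨?_, ?_⟩, le_rfl, ht0⟩, ?_⟩
    · simp [hθ.le]
    · simp only [abs_zero, add_zero, mul_one]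
      positivity
    · simpa [htubePoint, segPoint] using hp
  obtain ⟨v, ⟨⟨hvT, hv0, hvt⟩, hvΨ⟩, hmax⟩ := hF.exists_isMaxOn ⟨_, h0F⟩ continuous_fst.continuousOn
  have hvt' : v.1 < t := hvt.lt_of_ne fun h =>
    (not_le.2 (hend v hvT h) : ¬d 0 (tubePoint p v) ≤ 1) hvΨ
  obtain ⟨w, hwT, hvw, hwt, hwΨ⟩ :=
    exists_tube_advance hα hd hinvL hw hl0 hl1 hss p hθ hvT hv0 hvt' ht1
  exact (hmax ⟨⟨hwT, by linarith, hwt⟩, hwΨ.trans hvΨ⟩).not_gt hvw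

/-- Under the hypotheses of Theorem 6.7 (continuous self-similar quasi-distance on the
non-standard Heisenberg group of exponent `α > 1` satisfying WBCP), for every
`p = (x_p, y_p, z_p)` on the unit sphere with `x_p ≠ 0`, the segment
`σ̂_p = {((1−t)x_p, y_p, z_p + t·x_p·y_p/2) : t ∈ [0,1]}` is contained in the unit
ball. -/
theorem statement19 (α : ℝ) (hα : 1 < α)
    (d : (ℝ × ℝ × ℝ) → (ℝ × ℝ × ℝ) → ℝ)
    (hd : IsQuasiDist d)
    (hinvL : ∀ p q q', d (hmul p q) (hmul p q') = d q q')
    (hss : ∃ l₀ : ℝ, 0 < l₀ ∧ l₀ < 1 ∧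
      ∀ p q, d (hdil α l₀ p) (hdil α l₀ q) = l₀ * d p q)
    (hcont : Continuous (fun pq : (ℝ × ℝ × ℝ) × (ℝ × ℝ × ℝ) => d pq.1 pq.2))
    (hwbcp : HasWBCP d) :
    ∀ p : ℝ × ℝ × ℝ, d 0 p = 1 → p.1 ≠ 0 →
      ∀ t ∈ Set.Icc (0 : ℝ) 1,
        d 0 ((1 - t) * p.1, p.2.1, p.2.2 + t * (p.1 * p.2.1) / 2) ≤ 1 := by
  obtain ⟨l₀, hl0, hl1, hss⟩ := hss
  intro p hp _ t ht
  exact dist_zero_segPoint_le_one hα hd hinvL hl0 hl1 hss hcont hwbcp hp.le ht.1 ht.2
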